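/- Let G be a connected groupoid and e an object of G. The assignment sending an automorphism w of e to the functor Φ_w : Y_{G,e} → Y_{G,e} given by (a, u) ↦ (a, u ∘ w⁻¹) on objects and v ↦ v on morphisms defines a group isomorphism from Aut(e) to the group of automorphisms of the constructive functor F_{G,e} in the category of constructive functors over G (i.e., functors Φ : Y_{G,e} → Y_{G,e} with F_{G,e} ∘ Φ = F_{G,e} that are invertible). -/

import Mathlib

open CategoryTheory

universe v u

/-- The category `Y_{G,e}`: objects are pairs `(a, u : e ⟶ a)`, morphisms
`(a,u) ⟶ (a',u')` are morphisms `v : a ⟶ a'` of `G` with `u ≫ v = u'`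
(i.e. `u' = v ∘ u`). -/
structure YObj {G : Type u} [Groupoid.{v} G] (e : G) : Type (max u v) where
  pt : G
  up : e ⟶ pt

instance {G : Type u} [Groupoid.{v} G] (e : G) : Category.{v} (YObj e) where
  Hom p q := { v : p.pt ⟶ q.pt // p.up ≫ v = q.up }
  id p := ⟨𝟙 _, Category.comp_id _⟩
  comp f g := ⟨f.1 ≫ g.1, by rw [← Category.assoc, f.2, g.2]⟩
  id_comp f := Subtype.ext (Category.id_comp _)
  comp_id f := Subtype.ext (Category.comp_id _)
  assoc f g h := Subtype.ext (Category.assoc _ _ _)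

/-- The forgetful (universal covering) functor `F_{G,e} : Y_{G,e} ⥤ G`. -/
def FGe {G : Type u} [Groupoid.{v} G] (e : G) : YObj e ⥤ G where
  obj p := p.pt
  map f := f.1
  map_id _ := rfl
  map_comp _ _ := rfl
/-- The functor `Φ_w : Y_{G,e} ⥤ Y_{G,e'}` associated with `w : e ⟶ e'`, sending
`(a, u)` to `(a, u ∘ w⁻¹)` and `v` to `v`. -/
def PhiW {G : Type u} [Groupoid.{v} G] {e e' : G} (w : e ⟶ e') :
    YObj e ⥤ YObj e' where
  obj p := ⟨p.pt, Groupoid.inv w ≫ p.up⟩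
  map f := ⟨f.1, by rw [Category.assoc, f.2]⟩
  map_id _ := Subtype.ext rfl
  map_comp _ _ := Subtype.ext rfl

section

variable {G : Type u} [Groupoid.{v} G]

namespace YObj

instance {e : G} (p q : YObj e) : Subsingleton (p ⟶ q) :=
  ⟨fun f g => Subtype.ext ((cancel_epi p.up).mp (f.2.trans g.2.symm))⟩

theorem ext_of_up_comp_eqToHom {e : G} {p q : YObj e} (h : p.pt = q.pt)
    (hup : p.up ≫ eqToHom h = q.up) : p = q := by
  obtain ⟨a, u⟩ := p
  obtain ⟨b, u'⟩ := q
  cases h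
  simp only [eqToHom_refl, Category.comp_id] at hup
  rw [hup]

def base (e : G) : YObj e := ⟨e, 𝟙 e⟩

def fromBase {e : G} (p : YObj e) : base e ⟶ p := ⟨p.up, Category.id_comp _⟩

theorem functor_ext {C : Type*} [Category C] {e : G} {Ψ Ψ' : C ⥤ YObj e}
    (h : ∀ X, Ψ.obj X = Ψ'.obj X) : Ψ = Ψ' :=
  CategoryTheory.Functor.ext h fun _ _ _ => Subsingleton.elim _ _

end YObj

@[simp]
theorem PhiW_obj {e e' : G} (w : e ⟶ e') (p : YObj e) :
    (PhiW w).obj p = ⟨p.pt, inv w ≫ p.up⟩ := by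
  change (⟨p.pt, Groupoid.inv w ≫ p.up⟩ : YObj e') = _
  rw [Groupoid.inv_eq_inv]

theorem PhiW_comp_FGe {e e' : G} (w : e ⟶ e') : PhiW w ⋙ FGe e' = FGe e := rfl

theorem PhiW_id (e : G) : PhiW (𝟙 e) = 𝟭 (YObj e) :=
  YObj.functor_ext fun p => by simp

theorem PhiW_comp {e e' e'' : G} (w : e ⟶ e') (w' : e' ⟶ e'') :
    PhiW (w ≫ w') = PhiW w ⋙ PhiW w' :=
  YObj.functor_ext fun p => by simp

theorem PhiW_injective (e e' : G) : Function.Injective (PhiW : (e ⟶ e') → _) := by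
  intro w w' h
  have hbase := Functor.congr_obj h (YObj.base e)
  simpa [YObj.base, IsIso.inv_eq_inv] using hbase

/-- `w⁻¹` is read off the image of `(e, 𝟙 e)`; the rest of `Ψ` is then forced by the unique
morphisms out of `(e, 𝟙 e)`. -/
theorem exists_PhiW_eq {e e' : G} (Ψ : YObj e ⥤ YObj e') (hΨ : Ψ ⋙ FGe e' = FGe e) :
    ∃ w : e ⟶ e', PhiW w = Ψ := by
  have hpt (p : YObj e) : (Ψ.obj p).pt = p.pt := Functor.congr_obj hΨ p
  refine ⟨inv ((Ψ.obj (YObj.base e)).up ≫ eqToHom (hpt _)), YObj.functor_ext fun p => ?_⟩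
  rw [PhiW_obj]
  refine (YObj.ext_of_up_comp_eqToHom (hpt p) ?_).symm
  have hmap : (Ψ.map p.fromBase).1 = eqToHom (hpt _) ≫ p.up ≫ eqToHom (hpt p).symm := by
    simpa [FGe, YObj.fromBase] using Functor.congr_hom hΨ p.fromBase
  rw [← (Ψ.map p.fromBase).2, hmap]
  simp [YObj.base]

end

theorem stmt7_general {G : Type u} [Groupoid.{v} G] (e : G) :
    (∀ w : e ⟶ e, PhiW w ⋙ FGe e = FGe e) ∧
    PhiW (𝟙 e) = 𝟭 (YObj e) ∧
    (∀ w w' : e ⟶ e, PhiW (w ≫ w') = PhiW w ⋙ PhiW w') ∧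
    (Function.Injective fun w : e ⟶ e => PhiW (e := e) (e' := e) w) ∧
    (∀ Ψ : YObj e ⥤ YObj e, Ψ ⋙ FGe e = FGe e →
      (∃ Ψ' : YObj e ⥤ YObj e, Ψ' ⋙ FGe e = FGe e ∧
        Ψ ⋙ Ψ' = 𝟭 (YObj e) ∧ Ψ' ⋙ Ψ = 𝟭 (YObj e)) →
      ∃ w : e ⟶ e, PhiW w = Ψ) :=
  ⟨PhiW_comp_FGe, PhiW_id e, PhiW_comp, PhiW_injective e e,
    fun Ψ hΨ _ => exists_PhiW_eq Ψ hΨ⟩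

/-- The assignment `w ↦ Φ_w`, `(a,u) ↦ (a, u ∘ w⁻¹)`, defines a group isomorphism from
`Aut(e)` onto the group of automorphisms of `F_{G,e}` over `G`: it takes identity to
identity and composition to composition, it is injective, and it is surjective onto the
invertible endofunctors of `Y_{G,e}` over `G`. -/
theorem stmt7 {G : Type u} [Groupoid.{v} G] [IsConnected G] (e : G) :
    (∀ w : e ⟶ e, PhiW w ⋙ FGe e = FGe e) ∧
    PhiW (𝟙 e) = 𝟭 (YObj e) ∧
    (∀ w w' : e ⟶ e, PhiW (w ≫ w') = PhiW w ⋙ PhiW w') ∧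
    (Function.Injective fun w : e ⟶ e => PhiW (e := e) (e' := e) w) ∧
    (∀ Ψ : YObj e ⥤ YObj e, Ψ ⋙ FGe e = FGe e →
      (∃ Ψ' : YObj e ⥤ YObj e, Ψ' ⋙ FGe e = FGe e ∧
        Ψ ⋙ Ψ' = 𝟭 (YObj e) ∧ Ψ' ⋙ Ψ = 𝟭 (YObj e)) →
      ∃ w : e ⟶ e, PhiW w = Ψ) :=
  stmt7_general e
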